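/- Lower bound on the (p,q,r)-norm of the Strassen tensor: for all p,q,r ∈ [1,∞] and l,m,n ∈ ℕ, 1/(l^{|1/q−1/2|} · m^{|1/p−1/2|} · n^{|1/r−1/2|}) ≤ ‖μ_{l,m,n}‖_{p,q,r}. -/

import Mathlib

/-!
Testing the supremum on the elementary matrices `E_ab`, `E_bc`, `E_ca`, whose operator norms
all equal `1` and for which `tr (E_ab E_bc E_ca) = 1`, gives `1 ≤ ‖μ_{l,m,n}‖_{p,q,r}`, while the
left-hand side is at most `1` since `l, m, n ≥ 1`. Testing a real `⨆` is only legitimate once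
it is bounded: every entry of a matrix is bounded by each of its operator norms, whence
`|tr (XMY)| ≤ lmn ‖X‖ ‖Y‖ ‖M‖`.
-/

open scoped ENNReal BigOperators
open Matrix

/-- The vector ℓ^p norm on `Fin n → 𝕜` for `p ∈ [1,∞]`. -/
noncomputable def lpNorm (p : ℝ≥0∞) {n : ℕ} {𝕜 : Type*} [RCLike 𝕜] (x : Fin n → 𝕜) : ℝ :=
  if p = ∞ then ⨆ i, ‖x i‖ else (∑ i, ‖x i‖ ^ p.toReal) ^ (1 / p.toReal)

/-- The matrix (p,q)-operator norm: `max_{z ≠ 0} ‖Az‖_q / ‖z‖_p`. -/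
noncomputable def opNorm (p q : ℝ≥0∞) {m n : ℕ} {𝕜 : Type*} [RCLike 𝕜]
    (A : Matrix (Fin m) (Fin n) 𝕜) : ℝ :=
  ⨆ z : {z : Fin n → 𝕜 // z ≠ 0}, lpNorm q (A.mulVec z.1) / lpNorm p z.1

/-- The (p,q,r)-norm of the Strassen matrix multiplication tensor μ_{l,m,n}:
`max` over nonzero `X ∈ 𝕜^{l×m}`, `M ∈ 𝕜^{m×n}`, `Y ∈ 𝕜^{n×l}` of
`|tr(XMY)| / (‖X‖_{p,q} ‖Y‖_{q,r} ‖M‖_{r,p})`. -/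
noncomputable def muNorm (𝕜 : Type*) [RCLike 𝕜] (p q r : ℝ≥0∞) (l m n : ℕ) : ℝ :=
  ⨆ T : {T : Matrix (Fin l) (Fin m) 𝕜 × Matrix (Fin m) (Fin n) 𝕜 × Matrix (Fin n) (Fin l) 𝕜 //
      T.1 ≠ 0 ∧ T.2.1 ≠ 0 ∧ T.2.2 ≠ 0},
    ‖(T.1.1 * T.1.2.1 * T.1.2.2).trace‖ /
      (opNorm p q T.1.1 * opNorm q r T.1.2.2 * opNorm r p T.1.2.1)

section EntryBounds

variable {R : Type*} [SeminormedRing R] {l m n : Type*} [Fintype m]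

theorem Matrix.norm_mul_apply_le {A : Matrix l m R} {B : Matrix m n R} {a b : ℝ}
    (hA : ∀ i j, ‖A i j‖ ≤ a) (hB : ∀ j k, ‖B j k‖ ≤ b) (i : l) (k : n) :
    ‖(A * B) i k‖ ≤ Fintype.card m * (a * b) := by
  calc ‖(A * B) i k‖ ≤ ∑ j, ‖A i j‖ * ‖B j k‖ :=
        (norm_sum_le _ _).trans (Finset.sum_le_sum fun j _ => norm_mul_le _ _)
    _ ≤ ∑ _j : m, a * b := Finset.sum_le_sum fun j _ =>
        mul_le_mul (hA i j) (hB j k) (norm_nonneg _) ((norm_nonneg _).trans (hA i j))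
    _ = Fintype.card m * (a * b) := by simp

theorem Matrix.norm_trace_le {A : Matrix m m R} {c : ℝ} (hA : ∀ i, ‖A i i‖ ≤ c) :
    ‖A.trace‖ ≤ Fintype.card m * c := by
  calc ‖A.trace‖ ≤ ∑ i, ‖A i i‖ := norm_sum_le _ _
    _ ≤ ∑ _i : m, c := Finset.sum_le_sum fun i _ => hA i
    _ = Fintype.card m * c := by simp

end EntryBounds

section OperatorNorms

variable {𝕜 : Type*} [RCLike 𝕜] {p q : ℝ≥0∞} {M N : ℕ}

theorem lpNorm_eq_norm_toLp (hp : 1 ≤ p) (x : Fin N → 𝕜) :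
    lpNorm p x = ‖WithLp.toLp p x‖ := by
  unfold lpNorm
  split_ifs with h
  · subst h
    rfl
  · rw [PiLp.norm_eq_sum (ENNReal.toReal_pos (zero_lt_one.trans_le hp).ne' h)]

theorem opNorm_bddAbove (hp : 1 ≤ p) (hq : 1 ≤ q) (A : Matrix (Fin M) (Fin N) 𝕜) :
    BddAbove (Set.range fun z : {z : Fin N → 𝕜 // z ≠ 0} =>
      lpNorm q (A *ᵥ z.1) / lpNorm p z.1) := by
  have := Fact.mk hp
  have := Fact.mk hq
  -- finite-dimensional, so `A` is bounded from `ℓ^p` to `ℓ^q`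
  let L : PiLp p (fun _ : Fin N => 𝕜) →L[𝕜] PiLp q (fun _ : Fin M => 𝕜) :=
    LinearMap.toContinuousLinearMap
      ((WithLp.linearEquiv q 𝕜 _).symm.toLinearMap ∘ₗ Matrix.toLin' A ∘ₗ
        (WithLp.linearEquiv p 𝕜 _).toLinearMap)
  refine ⟨‖L‖, ?_⟩
  rintro _ ⟨⟨z, hz⟩, rfl⟩
  dsimp only
  rw [lpNorm_eq_norm_toLp hp, lpNorm_eq_norm_toLp hq]
  exact div_le_of_le_mul₀ (norm_nonneg _) (norm_nonneg _) (L.le_opNorm (WithLp.toLp p z))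

theorem opNorm_nonneg (hp : 1 ≤ p) (hq : 1 ≤ q) (A : Matrix (Fin M) (Fin N) 𝕜) :
    0 ≤ opNorm p q A :=
  have := Fact.mk hp
  have := Fact.mk hq
  Real.iSup_nonneg fun z => by
    rw [lpNorm_eq_norm_toLp hp, lpNorm_eq_norm_toLp hq]
    positivity

theorem div_lpNorm_le_opNorm (hp : 1 ≤ p) (hq : 1 ≤ q) (A : Matrix (Fin M) (Fin N) 𝕜)
    {z : Fin N → 𝕜} (hz : z ≠ 0) : lpNorm q (A *ᵥ z) / lpNorm p z ≤ opNorm p q A :=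
  le_ciSup (opNorm_bddAbove hp hq A) ⟨z, hz⟩

theorem norm_apply_le_opNorm (hp : 1 ≤ p) (hq : 1 ≤ q) (A : Matrix (Fin M) (Fin N) 𝕜)
    (i : Fin M) (j : Fin N) : ‖A i j‖ ≤ opNorm p q A := by
  have := Fact.mk hp
  have := Fact.mk hq
  have hj : (Pi.single j 1 : Fin N → 𝕜) ≠ 0 := Pi.single_ne_zero_iff.mpr one_ne_zero
  have := div_lpNorm_le_opNorm hp hq A hj
  rw [lpNorm_eq_norm_toLp hp, lpNorm_eq_norm_toLp hq, PiLp.toLp_single, PiLp.norm_single,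
    norm_one, div_one, mulVec_single_one] at this
  exact (PiLp.norm_apply_le (WithLp.toLp q (A.col j)) i).trans this

theorem opNorm_single_one (hp : 1 ≤ p) (hq : 1 ≤ q) (a : Fin M) (b : Fin N) :
    opNorm p q (single a b (1 : 𝕜)) = 1 := by
  refine le_antisymm ?_ (by simpa using norm_apply_le_opNorm hp hq (single a b (1 : 𝕜)) a b)
  have := Fact.mk hp
  have := Fact.mk hq
  have : Nonempty {z : Fin N → 𝕜 // z ≠ 0} :=
    ⟨⟨Pi.single b 1, Pi.single_ne_zero_iff.mpr one_ne_zero⟩⟩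
  refine ciSup_le fun ⟨z, _⟩ => ?_
  rw [single_mulVec, one_mul, lpNorm_eq_norm_toLp hq, lpNorm_eq_norm_toLp hp]
  refine div_le_one_of_le₀ ?_ (norm_nonneg _)
  exact (PiLp.norm_single q (fun _ => 𝕜) a (z b)).trans_le
    (PiLp.norm_apply_le (WithLp.toLp p z) b)

end OperatorNorms

section StrassenTensor

variable (𝕜 : Type*) [RCLike 𝕜] {p q r : ℝ≥0∞} {l m n : ℕ}

theorem muNorm_bddAbove (hp : 1 ≤ p) (hq : 1 ≤ q) (hr : 1 ≤ r) :
    BddAbove (Set.range fun T :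
        {T : Matrix (Fin l) (Fin m) 𝕜 × Matrix (Fin m) (Fin n) 𝕜 × Matrix (Fin n) (Fin l) 𝕜 //
          T.1 ≠ 0 ∧ T.2.1 ≠ 0 ∧ T.2.2 ≠ 0} =>
      ‖(T.1.1 * T.1.2.1 * T.1.2.2).trace‖ /
        (opNorm p q T.1.1 * opNorm q r T.1.2.2 * opNorm r p T.1.2.1)) := by
  refine ⟨l * m * n, ?_⟩
  rintro _ ⟨⟨⟨X, M, Y⟩, -⟩, rfl⟩
  have hXM := Matrix.norm_mul_apply_le (norm_apply_le_opNorm hp hq X)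
    (norm_apply_le_opNorm hr hp M)
  have hXMY := Matrix.norm_mul_apply_le hXM (norm_apply_le_opNorm hq hr Y)
  have htr := Matrix.norm_trace_le fun i => hXMY i i
  simp only [Fintype.card_fin] at htr
  have hden := mul_nonneg (mul_nonneg (opNorm_nonneg hp hq X) (opNorm_nonneg hq hr Y))
    (opNorm_nonneg hr hp M)
  exact div_le_of_le_mul₀ hden (by positivity) (htr.trans_eq (by ring))

theorem one_le_muNorm (hp : 1 ≤ p) (hq : 1 ≤ q) (hr : 1 ≤ r)
    (hl : 0 < l) (hm : 0 < m) (hn : 0 < n) : 1 ≤ muNorm 𝕜 p q r l m n := by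
  let a : Fin l := ⟨0, hl⟩
  let b : Fin m := ⟨0, hm⟩
  let c : Fin n := ⟨0, hn⟩
  have hne {M N : ℕ} (i : Fin M) (j : Fin N) : single i j (1 : 𝕜) ≠ 0 :=
    fun h => one_ne_zero (α := 𝕜) (by simpa using congrFun (congrFun h i) j)
  refine le_of_eq_of_le ?_
    (le_ciSup (muNorm_bddAbove 𝕜 hp hq hr) ⟨(single a b 1, single b c 1, single c a 1),
      hne a b, hne b c, hne c a⟩)
  simp [single_mul_single_same, trace_single_eq_same, opNorm_single_one hp hq,
    opNorm_single_one hq hr, opNorm_single_one hr hp]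

end StrassenTensor

/-- Lower bound on the (p,q,r)-norm of the Strassen tensor:
`1/(l^{|1/q−1/2|} m^{|1/p−1/2|} n^{|1/r−1/2|}) ≤ ‖μ_{l,m,n}‖_{p,q,r}`. -/
theorem stmt15 (𝕜 : Type*) [RCLike 𝕜] (p q r : ℝ≥0∞) (hp : 1 ≤ p) (hq : 1 ≤ q) (hr : 1 ≤ r)
    (l m n : ℕ) (hl : 0 < l) (hm : 0 < m) (hn : 0 < n) :
    1 / ((l : ℝ) ^ |1 / q.toReal - 1 / 2| * (m : ℝ) ^ |1 / p.toReal - 1 / 2| *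
        (n : ℝ) ^ |1 / r.toReal - 1 / 2|) ≤ muNorm 𝕜 p q r l m n := by
  have one_le_pow {k : ℕ} (hk : 0 < k) (s : ℝ) : (1 : ℝ) ≤ (k : ℝ) ^ |s| :=
    Real.one_le_rpow (by exact_mod_cast hk) (abs_nonneg s)
  have hden := one_le_mul_of_one_le_of_one_le
    (one_le_mul_of_one_le_of_one_le (one_le_pow hl (1 / q.toReal - 1 / 2))
      (one_le_pow hm (1 / p.toReal - 1 / 2))) (one_le_pow hn (1 / r.toReal - 1 / 2))
  calc _ ≤ (1 : ℝ) := div_le_one_of_le₀ hden (zero_le_one.trans hden)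
    _ ≤ muNorm 𝕜 p q r l m n := one_le_muNorm 𝕜 hp hq hr hl hm hn
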